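/- arXiv:2012.11424 — 3 statements merged into one kernel-verified Lean document; each statement's English description precedes it below -/
import Mathlib

section
/- The optimal local fidelity function F(s) = 1/2 + (√2/(32s))(1+s)(3−3s+√(1−2s+9s²))·√(−1+2s+3s²+(1−s)√(1−2s+9s²)) attains its minimum over s ∈ (0,1] at s = 1/2. -/
open Real

/-- The optimal local fidelity for 1→2 cloning of two pure states with fixed overlap `s`. -/
noncomputable def optLocalFidelity (s : ℝ) : ℝ :=
  1/2 + (Real.sqrt 2 / (32 * s)) * (1 + s) * (3 - 3*s + Real.sqrt (1 - 2*s + 9*s^2)) *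
    Real.sqrt (-1 + 2*s + 3*s^2 + (1 - s) * Real.sqrt (1 - 2*s + 9*s^2))

lemma q_nonneg {s : ℝ} (hs0 : 0 ≤ s) (hc : s ≤ 99/100) :
    0 ≤ 208 + 416*s - 1145*s^2 + 10972*s^3 - 2428*s^4 - 8192*s^5 := by
  nlinarith [mul_nonneg hs0 (sub_nonneg.2 hc), mul_nonneg (mul_nonneg hs0 hs0) (sub_nonneg.2 hc),
    mul_nonneg (mul_nonneg (mul_nonneg hs0 hs0) hs0) (sub_nonneg.2 hc),
    mul_nonneg (mul_nonneg (mul_nonneg (mul_nonneg hs0 hs0) hs0) hs0) (sub_nonneg.2 hc),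
    sq_nonneg s, sq_nonneg (s - 1/5), mul_nonneg hs0 hs0]

lemma A_nonneg_large {s : ℝ} (hc : 99/100 ≤ s) :
    0 ≤ 216*s^6 + 144*s^5 - 248*s^4 - 32*s^3 - 75*s^2 + 16*s - 8 := by
  have hu : 0 ≤ s - 99/100 := by linarith
  nlinarith [hu, pow_nonneg hu 2, pow_nonneg hu 3, pow_nonneg hu 4, pow_nonneg hu 5,
    pow_nonneg hu 6]

lemma B_nonneg {s : ℝ} (hs0 : 0 ≤ s) (hs1 : s ≤ 1) :
    0 ≤ -72*s^5 - 56*s^4 + 80*s^3 + 48*s^2 - 8*s + 8 := by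
  have h1 : 0 ≤ 1 - s := by linarith
  have h2 : 0 ≤ 9*s^4 + 16*s^3 + 6*s^2 + 1 := by positivity
  nlinarith [mul_nonneg h1 h2]

/-- The optimal local fidelity attains its minimum over `s ∈ (0,1]` at `s = 1/2`. -/
theorem optLocalFidelity_min_at_half :
    ∀ s ∈ Set.Ioc (0 : ℝ) 1, optLocalFidelity (1/2) ≤ optLocalFidelity s := by
  have hhalf : optLocalFidelity (1/2) = 1/2 + (9/32) * Real.sqrt 3 := by
    rw [optLocalFidelity]
    have h1 : Real.sqrt (1 - 2*(1/2:ℝ) + 9*(1/2:ℝ)^2) = 3/2 := by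
      rw [show (1 - 2*(1/2:ℝ) + 9*(1/2:ℝ)^2) = (3/2)^2 by norm_num]
      exact Real.sqrt_sq (by norm_num)
    rw [h1]
    rw [show (-1 + 2*(1/2:ℝ) + 3*(1/2:ℝ)^2 + (1 - 1/2) * (3/2)) = 3/2 by norm_num]
    have h3 : Real.sqrt 2 * Real.sqrt (3/2) = Real.sqrt 3 := by
      rw [← Real.sqrt_mul (by norm_num)]; norm_num
    have : Real.sqrt 2 / (32 * (1/2:ℝ)) * (1 + 1/2) * (3 - 3*(1/2) + 3/2) * Real.sqrt (3/2)
        = (9/32) * (Real.sqrt 2 * Real.sqrt (3/2)) := by ring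
    rw [this, h3]
  intro s hs
  obtain ⟨hs0, hs1⟩ := hs
  rw [hhalf, optLocalFidelity]
  have hD : (0:ℝ) ≤ 1 - 2*s + 9*s^2 := by nlinarith [sq_nonneg (3*s - 1/3)]
  set t := Real.sqrt (1 - 2*s + 9*s^2) with htdef
  have ht0 : 0 ≤ t := Real.sqrt_nonneg _
  have ht2 : t^2 = 1 - 2*s + 9*s^2 := Real.sq_sqrt hD
  have hE : 0 ≤ -1 + 2*s + 3*s^2 + (1 - s) * t := by
    rcases le_or_gt (1 - 2*s - 3*s^2) 0 with h | h
    · have : 0 ≤ (1 - s) * t := mul_nonneg (by linarith) ht0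
      linarith
    · have hs12 : s < 1/2 := by nlinarith
      have hsq : (1 - 2*s - 3*s^2)^2 ≤ ((1 - s) * t)^2 := by
        have : ((1 - s) * t)^2 = (1-s)^2 * (1 - 2*s + 9*s^2) := by
          rw [mul_pow, ht2]
        rw [this]
        nlinarith [mul_nonneg (mul_nonneg hs0.le hs0.le) (by linarith : (0:ℝ) ≤ 1 - 2*s)]
      have h1st : 0 ≤ (1 - s) * t := mul_nonneg (by linarith) ht0
      nlinarith [hsq, h1st]
  set x := Real.sqrt (-1 + 2*s + 3*s^2 + (1 - s) * t) with hxdef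
  have hx0 : 0 ≤ x := Real.sqrt_nonneg _
  have hx2 : x^2 = -1 + 2*s + 3*s^2 + (1 - s) * t := Real.sq_sqrt hE
  -- core polynomial inequality
  have habt : 0 ≤ (216*s^6 + 144*s^5 - 248*s^4 - 32*s^3 - 75*s^2 + 16*s - 8)
      + (-72*s^5 - 56*s^4 + 80*s^3 + 48*s^2 - 8*s + 8) * t := by
    have hB : 0 ≤ -72*s^5 - 56*s^4 + 80*s^3 + 48*s^2 - 8*s + 8 := B_nonneg hs0.le hs1
    rcases le_or_gt s (99/100) with hc | hc
    · have hq := q_nonneg hs0.le hc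
      have hBt : 0 ≤ (-72*s^5 - 56*s^4 + 80*s^3 + 48*s^2 - 8*s + 8) * t := mul_nonneg hB ht0
      have hsq2 : (216*s^6 + 144*s^5 - 248*s^4 - 32*s^3 - 75*s^2 + 16*s - 8)^2
          ≤ ((-72*s^5 - 56*s^4 + 80*s^3 + 48*s^2 - 8*s + 8) * t)^2 := by
        have h1 : ((-72*s^5 - 56*s^4 + 80*s^3 + 48*s^2 - 8*s + 8) * t)^2
            = (-72*s^5 - 56*s^4 + 80*s^3 + 48*s^2 - 8*s + 8)^2 * (1 - 2*s + 9*s^2) := by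
          rw [mul_pow, ht2]
        rw [h1]
        nlinarith [mul_nonneg (mul_nonneg (sq_nonneg s) (sq_nonneg (2*s - 1))) hq]
      nlinarith [hsq2, hBt, sq_nonneg ((216*s^6 + 144*s^5 - 248*s^4 - 32*s^3 - 75*s^2 + 16*s - 8)
        + (-72*s^5 - 56*s^4 + 80*s^3 + 48*s^2 - 8*s + 8) * t)]
    · have hA := A_nonneg_large hc.le
      have hBt : 0 ≤ (-72*s^5 - 56*s^4 + 80*s^3 + 48*s^2 - 8*s + 8) * t := mul_nonneg hB ht0
      linarith
  have hcore : 243*s^2 ≤ 2*(1+s)^2*(3 - 3*s + t)^2*(-1 + 2*s + 3*s^2 + (1 - s)*t) := by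
    have hid : 2*(1+s)^2*(3 - 3*s + t)^2*(-1 + 2*s + 3*s^2 + (1 - s)*t)
        = 243*s^2 + ((216*s^6 + 144*s^5 - 248*s^4 - 32*s^3 - 75*s^2 + 16*s - 8)
          + (-72*s^5 - 56*s^4 + 80*s^3 + 48*s^2 - 8*s + 8) * t) := by
      linear_combination (2*(1+s)^2*(9*s^2 - 10*s + 5) + 2*(1+s)^2*(1-s)*t) * ht2
    rw [hid]; linarith
  have h3s2 : 0 ≤ 3 - 3*s + t := by linarith
  have hkey : 9 * Real.sqrt 3 * s ≤ Real.sqrt 2 * (1+s) * (3 - 3*s + t) * x := by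
    have hL0 : 0 ≤ 9 * Real.sqrt 3 * s :=
      mul_nonneg (mul_nonneg (by norm_num) (Real.sqrt_nonneg 3)) hs0.le
    have hR0 : 0 ≤ Real.sqrt 2 * (1+s) * (3 - 3*s + t) * x :=
      mul_nonneg (mul_nonneg (mul_nonneg (Real.sqrt_nonneg 2) (by linarith)) h3s2) hx0
    have hsq : (9 * Real.sqrt 3 * s)^2 ≤ (Real.sqrt 2 * (1+s) * (3 - 3*s + t) * x)^2 := by
      have e1 : (9 * Real.sqrt 3 * s)^2 = 81 * (Real.sqrt 3)^2 * s^2 := by ring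
      have e2 : (Real.sqrt 2 * (1+s) * (3 - 3*s + t) * x)^2
          = (Real.sqrt 2)^2 * (1+s)^2 * (3 - 3*s + t)^2 * x^2 := by ring
      rw [e1, e2, Real.sq_sqrt (by norm_num : (0:ℝ) ≤ 3),
        Real.sq_sqrt (by norm_num : (0:ℝ) ≤ 2), hx2]
      calc 81 * 3 * s^2 = 243*s^2 := by ring
        _ ≤ 2*(1+s)^2*(3 - 3*s + t)^2*(-1 + 2*s + 3*s^2 + (1 - s)*t) := hcore
        _ = 2 * (1+s)^2 * (3 - 3*s + t)^2 * (-1 + 2*s + 3*s^2 + (1 - s)*t) := by ring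
    calc 9 * Real.sqrt 3 * s = Real.sqrt ((9 * Real.sqrt 3 * s)^2) := (Real.sqrt_sq hL0).symm
      _ ≤ Real.sqrt ((Real.sqrt 2 * (1+s) * (3 - 3*s + t) * x)^2) := Real.sqrt_le_sqrt hsq
      _ = Real.sqrt 2 * (1+s) * (3 - 3*s + t) * x := Real.sqrt_sq hR0
  have hs32 : (0:ℝ) < 32*s := by linarith
  have hrw : Real.sqrt 2 / (32*s) * (1+s) * (3 - 3*s + t) * x
      = (Real.sqrt 2 * (1+s) * (3 - 3*s + t) * x) / (32*s) := by ring
  rw [hrw]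
  have : 9/32 * Real.sqrt 3 ≤ (Real.sqrt 2 * (1+s) * (3 - 3*s + t) * x) / (32*s) := by
    rw [le_div_iff₀ hs32]
    calc 9/32 * Real.sqrt 3 * (32*s) = 9 * Real.sqrt 3 * s := by ring
      _ ≤ _ := hkey
  linarith
end

section
/- The fidelities F_B = 1 − p²/2 and F_E = 1 − q²/2 with p² + q² + pq = 1, p,q ∈ [0,1], saturate the no-cloning inequality: √((1 − F_B)(1 − F_E)) = F_B + F_E − 3/2. -/
open Real

/-- The fidelities `F_B = 1 − p²/2` and `F_E = 1 − q²/2` with `p² + q² + pq = 1`,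
`p, q ∈ [0,1]`, saturate the no-cloning inequality:
`√((1 − F_B)(1 − F_E)) = F_B + F_E − 3/2`. -/
theorem no_cloning_inequality_saturated (p q : ℝ)
    (hp : p ∈ Set.Icc (0 : ℝ) 1) (hq : q ∈ Set.Icc (0 : ℝ) 1)
    (hcon : p^2 + q^2 + p*q = 1) :
    Real.sqrt ((1 - (1 - p^2/2)) * (1 - (1 - q^2/2)))
      = (1 - p^2/2) + (1 - q^2/2) - 3/2 := by
  have h1 : (1 - (1 - p^2/2)) * (1 - (1 - q^2/2)) = (p*q/2)^2 := by ring
  rw [h1, Real.sqrt_sq (by nlinarith [hp.1, hq.1, mul_nonneg hp.1 hq.1])]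
  nlinarith
end

section
/- Let ρ be a density operator on an N-fold tensor product of a Hilbert space H, and |ψ⟩ ∈ H a unit vector. Define O_L = I − (1/N)Σⱼ |ψ⟩⟨ψ|ⱼ ⊗ I_{j̄} and O_G = I − |ψ⟩⟨ψ|^{⊗N}. Then Tr(O_L ρ) ≤ Tr(O_G ρ) ≤ N·Tr(O_L ρ). -/
open Matrix
open scoped ComplexOrder

/-- The operator `P_j ⊗ I_{j̄}` on `H^{⊗N}` (with `H = ℂ^d` and `H^{⊗N}` identified with
`ℂ^(Fin N → Fin d)`): it acts as `P` on the `j`-th tensor factor and as identity elsewhere. -/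
def factorOp (d N : ℕ) (P : Matrix (Fin d) (Fin d) ℂ) (j : Fin N) :
    Matrix (Fin N → Fin d) (Fin N → Fin d) ℂ :=
  fun x y => P (x j) (y j) * ∏ i ∈ Finset.univ.erase j, (if x i = y i then (1 : ℂ) else 0)

/-- The `N`-fold tensor power `P^{⊗N}`. -/
def tensorPow (d N : ℕ) (P : Matrix (Fin d) (Fin d) ℂ) :
    Matrix (Fin N → Fin d) (Fin N → Fin d) ℂ :=
  fun x y => ∏ i, P (x i) (y i)

/-! The operators `Qⱼ = |ψ⟩⟨ψ|ⱼ ⊗ I_{j̄}` are pairwise commuting orthogonal projections whose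
product is `T = |ψ⟩⟨ψ|^{⊗N}`. Hence `T ≤ Qⱼ` for every `j`, and averaging over `j` gives
`O_L ≤ O_G`. For commuting projections `p, q` the defect of the union bound
`1 - pq ≤ (1 - p) + (1 - q)` is the projection `(1 - p)(1 - q) ≥ 0`; iterated over the factors
it gives `O_G = 1 - T ≤ Σⱼ (1 - Qⱼ) = N • O_L`. Both operator inequalities survive `X ↦ Tr(X ρ)`
because `ρ ≥ 0`. -/

open scoped MatrixOrder

theorem IsStarProjection.one_sub_mul_le {R : Type*} [Ring R] [PartialOrder R] [StarRing R]
    [StarOrderedRing R] {p q : R} (hp : IsStarProjection p) (hq : IsStarProjection q)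
    (hpq : Commute p q) : 1 - p * q ≤ (1 - p) + (1 - q) := by
  have hdefect : (1 - p) + (1 - q) - (1 - p * q) = (1 - p) * (1 - q) := by noncomm_ring
  rw [← sub_nonneg, hdefect]
  exact (hp.one_sub.mul hq.one_sub
    ((Commute.one_right _).sub_right ((Commute.one_left q).sub_left hpq))).nonneg

namespace Matrix

theorem re_trace_mul_le_re_trace_mul {n 𝕜 : Type*} [Fintype n] [RCLike 𝕜]
    {A B ρ : Matrix n n 𝕜} (hAB : A ≤ B) (hρ : ρ.PosSemidef) :
    RCLike.re (A * ρ).trace ≤ RCLike.re (B * ρ).trace := by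
  classical
  obtain ⟨S, rfl⟩ := CStarAlgebra.nonneg_iff_eq_star_mul_self.mp hρ.nonneg
  have hconj : 0 ≤ (S * (B - A) * star S).trace :=
    (star_right_conjugate_nonneg (sub_nonneg.mpr hAB) S).posSemidef.trace_nonneg
  rw [trace_mul_cycle, trace_mul_comm, sub_mul, trace_sub] at hconj
  simpa using (RCLike.nonneg_iff.mp hconj).1

theorem isStarProjection_vecMulVec_star {m R : Type*} [Fintype m] [CommSemiring R] [StarRing R]
    {ψ : m → R} (hψ : star ψ ⬝ᵥ ψ = 1) : IsStarProjection (vecMulVec ψ (star ψ)) where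
  isIdempotentElem := by rw [IsIdempotentElem, vecMulVec_mul_vecMulVec, hψ, one_smul]
  isSelfAdjoint := by rw [IsSelfAdjoint, star_eq_conjTranspose, conjTranspose_vecMulVec, star_star]

variable {ι m R : Type*} [Fintype ι]

def piKronecker [CommMonoid R] (A : ι → Matrix m m R) : Matrix (ι → m) (ι → m) R :=
  of fun x y => ∏ i, A i (x i) (y i)

theorem piKronecker_mul [DecidableEq ι] [Fintype m] [CommSemiring R] (A B : ι → Matrix m m R) :
    piKronecker A * piKronecker B = piKronecker (A * B) := by
  ext x y
  simp only [piKronecker, mul_apply, of_apply, Pi.mul_apply, Fintype.prod_sum,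
    Finset.prod_mul_distrib]

theorem piKronecker_one [DecidableEq m] [CommSemiring R] :
    piKronecker (1 : ι → Matrix m m R) = 1 := by
  ext x y
  simp only [piKronecker, of_apply, Pi.one_apply, one_apply, Finset.prod_boole, funext_iff,
    Finset.mem_univ, true_implies]

theorem piKronecker_conjTranspose [CommSemiring R] [StarRing R] (A : ι → Matrix m m R) :
    (piKronecker A)ᴴ = piKronecker fun i => (A i)ᴴ := by
  ext x y
  simp [piKronecker, star_prod]

variable [DecidableEq ι] [DecidableEq m]

def tensorOn [CommSemiring R] (P : Matrix m m R) (s : Finset ι) : Matrix (ι → m) (ι → m) R :=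
  piKronecker fun i => if i ∈ s then P else 1

section Semiring

variable [CommSemiring R] {P : Matrix m m R}

theorem tensorOn_empty : tensorOn P (∅ : Finset ι) = 1 := by
  simp only [tensorOn, Finset.notMem_empty, if_false]
  exact piKronecker_one

variable [Fintype m]

theorem tensorOn_mul_tensorOn (hP : IsIdempotentElem P) (s t : Finset ι) :
    tensorOn P s * tensorOn P t = tensorOn P (s ∪ t) := by
  rw [tensorOn, tensorOn, piKronecker_mul]
  congr 1
  ext1 i
  by_cases hs : i ∈ s <;> by_cases ht : i ∈ t <;> simp [hs, ht, hP.eq]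

theorem commute_tensorOn (hP : IsIdempotentElem P) (s t : Finset ι) :
    Commute (tensorOn P s) (tensorOn P t) := by
  rw [Commute, SemiconjBy, tensorOn_mul_tensorOn hP, tensorOn_mul_tensorOn hP, Finset.union_comm]

theorem isStarProjection_tensorOn [StarRing R] (hP : IsStarProjection P) (s : Finset ι) :
    IsStarProjection (tensorOn P s) where
  isIdempotentElem := by
    rw [IsIdempotentElem, tensorOn_mul_tensorOn hP.isIdempotentElem, Finset.union_self]
  isSelfAdjoint := by
    rw [IsSelfAdjoint, star_eq_conjTranspose, tensorOn, piKronecker_conjTranspose]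
    congr 1
    ext1 i
    split_ifs
    · exact hP.isSelfAdjoint
    · exact conjTranspose_one

end Semiring

section Order

variable {𝕜 : Type*} [RCLike 𝕜] [Fintype m] {P : Matrix m m 𝕜}

theorem tensorOn_anti (hP : IsStarProjection P) {s t : Finset ι} (hst : s ⊆ t) :
    tensorOn P t ≤ tensorOn P s :=
  (isStarProjection_tensorOn hP t).le_of_mul_eq_left (isStarProjection_tensorOn hP s) <| by
    rw [tensorOn_mul_tensorOn hP.isIdempotentElem, Finset.union_eq_left.mpr hst]

theorem card_smul_tensorOn_univ_le_sum (hP : IsStarProjection P) :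
    (Fintype.card ι : 𝕜) • tensorOn P Finset.univ ≤ ∑ j : ι, tensorOn P {j} := by
  rw [Nat.cast_smul_eq_nsmul, ← Finset.card_univ, ← Finset.sum_const]
  exact Finset.sum_le_sum fun j _ => tensorOn_anti hP (Finset.subset_univ {j})

theorem one_sub_tensorOn_le_sum (hP : IsStarProjection P) (s : Finset ι) :
    1 - tensorOn P s ≤ ∑ j ∈ s, (1 - tensorOn P {j}) := by
  induction s using Finset.induction_on with
  | empty => rw [tensorOn_empty, sub_self, Finset.sum_empty]
  | insert j s hj ih =>
    rw [Finset.sum_insert hj, Finset.insert_eq, ← tensorOn_mul_tensorOn hP.isIdempotentElem]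
    have hunion := (isStarProjection_tensorOn hP {j}).one_sub_mul_le
      (isStarProjection_tensorOn hP s) (commute_tensorOn hP.isIdempotentElem _ _)
    exact hunion.trans (add_le_add le_rfl ih)

end Order

end Matrix
theorem factorOp_eq_tensorOn (d N : ℕ) (P : Matrix (Fin d) (Fin d) ℂ) (j : Fin N) :
    factorOp d N P j = tensorOn P {j} := by
  ext x y
  simp only [factorOp, tensorOn, piKronecker, of_apply, Finset.mem_singleton]
  rw [← Finset.mul_prod_erase Finset.univ _ (Finset.mem_univ j), if_pos rfl]
  congr 1
  refine Finset.prod_congr rfl fun i hi => ?_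
  rw [if_neg (Finset.ne_of_mem_erase hi), one_apply]

theorem tensorPow_eq_tensorOn (d N : ℕ) (P : Matrix (Fin d) (Fin d) ℂ) :
    tensorPow d N P = tensorOn P (Finset.univ : Finset (Fin N)) := by
  ext x y
  simp [tensorPow, tensorOn, piKronecker]

theorem local_global_cost_inequality_general (d N : ℕ) (hN : 1 ≤ N)
    (ψ : Fin d → ℂ) (hψ : ∑ a, ‖ψ a‖^2 = 1)
    (P : Matrix (Fin d) (Fin d) ℂ) (hP : P = fun a b => ψ a * star (ψ b))
    (ρ : Matrix (Fin N → Fin d) (Fin N → Fin d) ℂ)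
    (hρ : ρ.PosSemidef)
    (OL OG : Matrix (Fin N → Fin d) (Fin N → Fin d) ℂ)
    (hOL : OL = 1 - ((N : ℂ)⁻¹) • ∑ j : Fin N, factorOp d N P j)
    (hOG : OG = 1 - tensorPow d N P) :
    ((OL * ρ).trace).re ≤ ((OG * ρ).trace).re ∧
    ((OG * ρ).trace).re ≤ (N : ℝ) * ((OL * ρ).trace).re := by
  have hN0 : (N : ℂ) ≠ 0 := Nat.cast_ne_zero.mpr (by omega)
  have hPproj : IsStarProjection P := by
    refine hP ▸ isStarProjection_vecMulVec_star ?_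
    simp only [dotProduct, Pi.star_apply, RCLike.star_def, Complex.conj_mul']
    exact_mod_cast hψ
  simp only [factorOp_eq_tensorOn, tensorPow_eq_tensorOn] at hOL hOG
  set T := tensorOn P (Finset.univ : Finset (Fin N))
  set Q := fun j : Fin N => tensorOn P {j}
  have hLG : OL ≤ OG := by
    have hT : (N : ℂ) • T ≤ ∑ j, Q j := by
      simpa only [Fintype.card_fin] using card_smul_tensorOn_univ_le_sum (ι := Fin N) hPproj
    have hdiff : OG - OL = (N : ℂ)⁻¹ • (∑ j, Q j - (N : ℂ) • T) := by
      rw [hOL, hOG, smul_sub, smul_smul, inv_mul_cancel₀ hN0, one_smul]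
      abel
    rw [← sub_nonneg, hdiff]
    exact ((sub_nonneg.mpr hT).posSemidef.smul (by positivity)).nonneg
  have hGL : OG ≤ (N : ℂ) • OL :=
    calc OG = 1 - T := hOG
      _ ≤ ∑ j, (1 - Q j) := one_sub_tensorOn_le_sum hPproj _
      _ = (N : ℂ) • OL := by
        rw [hOL, Finset.sum_sub_distrib, smul_sub, smul_smul, mul_inv_cancel₀ hN0, one_smul,
          Finset.sum_const, Finset.card_univ, Fintype.card_fin, Nat.cast_smul_eq_nsmul]
  refine ⟨re_trace_mul_le_re_trace_mul hLG hρ, ?_⟩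
  simpa using re_trace_mul_le_re_trace_mul hGL hρ

/-- For a density operator `ρ` on `H^{⊗N}` and a unit vector `ψ ∈ H`, with
`O_L = I − (1/N)Σⱼ |ψ⟩⟨ψ|ⱼ ⊗ I_{j̄}` and `O_G = I − |ψ⟩⟨ψ|^{⊗N}`, one has
`Tr(O_L ρ) ≤ Tr(O_G ρ) ≤ N·Tr(O_L ρ)`. -/
theorem local_global_cost_inequality (d N : ℕ) (hd : 0 < d) (hN : 1 ≤ N)
    (ψ : Fin d → ℂ) (hψ : ∑ a, ‖ψ a‖^2 = 1)
    (P : Matrix (Fin d) (Fin d) ℂ) (hP : P = fun a b => ψ a * star (ψ b))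
    (ρ : Matrix (Fin N → Fin d) (Fin N → Fin d) ℂ)
    (hρ : ρ.PosSemidef) (hρtr : ρ.trace = 1)
    (OL OG : Matrix (Fin N → Fin d) (Fin N → Fin d) ℂ)
    (hOL : OL = 1 - ((N : ℂ)⁻¹) • ∑ j : Fin N, factorOp d N P j)
    (hOG : OG = 1 - tensorPow d N P) :
    ((OL * ρ).trace).re ≤ ((OG * ρ).trace).re ∧
    ((OG * ρ).trace).re ≤ (N : ℝ) * ((OL * ρ).trace).re :=
  local_global_cost_inequality_general d N hN ψ hψ P hP ρ hρ OL OG hOL hOG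
end
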